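/- Let n ≥ 1, 0 < β < 1, 0 < α₁ ≤ α₂, and ε ≥ 0. Let Φ: ℝⁿ → ℝⁿ be continuously differentiable and let M be a continuous map from ℝⁿ to the n×n real symmetric matrices with α₁‖v‖² ≤ vᵀ M(x) v ≤ α₂‖v‖² for all x, v, and DΦ(x)ᵀ M(Φ(x)) DΦ(x) ⪯ (1−β) M(x) for all x. Let (x_k), (y_k) be sequences in ℝⁿ with x_{k+1} = Φ(x_k) + w_k, ‖w_k‖ ≤ ε for all k, and y_{k+1} = Φ(y_k). Then limsup_{k→∞} ‖x_k − y_k‖ ≤ (√α₂/√α₁) · ε / (1 − √(1−β)). -/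

import Mathlib

/-!
Think of `M` as a Riemannian metric on `ℝⁿ`. The contraction condition says that `Φ` shrinks the
`M`-length of every `C¹` curve by the factor `ρ = √(1 - β)`. If `y k` and `x k` are joined by a
chain of curves of `M`-length `L k`, then applying `Φ` and appending the segment from `Φ (x k)` to
`x (k + 1)` joins `y (k + 1)` to `x (k + 1)` with length `ρ * L k + √α₂ * ε`. The metric bounds give
`√α₁ * ‖x k - y k‖ ≤ L k`, and `L k → √α₂ * ε / (1 - ρ)`.
-/

open Matrix

noncomputable def euclNorm {n : ℕ} (v : Fin n → ℝ) : ℝ :=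
  Real.sqrt (v ⬝ᵥ v)

open Filter Topology

section

variable {n : ℕ}

lemma euclNorm_eq_norm_toLp (v : Fin n → ℝ) : euclNorm v = ‖WithLp.toLp 2 v‖ := by
  rw [EuclideanSpace.norm_eq, euclNorm]
  simp [dotProduct, sq]

lemma euclNorm_add_le (u v : Fin n → ℝ) : euclNorm (u + v) ≤ euclNorm u + euclNorm v := by
  simpa only [euclNorm_eq_norm_toLp, WithLp.toLp_add] using norm_add_le _ _

lemma euclNorm_sub_le_integral {γ : ℝ → Fin n → ℝ} (hγ : ContDiff ℝ 1 γ) :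
    euclNorm (γ 1 - γ 0) ≤ ∫ t in (0 : ℝ)..1, euclNorm (deriv γ t) := by
  let e := (EuclideanSpace.equiv (Fin n) ℝ).symm
  have hderiv : ∀ t, HasDerivAt (fun s => e (γ s)) (e (deriv γ t)) t := fun t =>
    e.hasFDerivAt.comp_hasDerivAt t (hγ.differentiable one_ne_zero t).hasDerivAt
  have hint : IntervalIntegrable (fun t => e (deriv γ t)) MeasureTheory.volume 0 1 :=
    (e.continuous.comp (hγ.continuous_deriv le_rfl)).intervalIntegrable _ _
  calc euclNorm (γ 1 - γ 0) = ‖∫ t in (0 : ℝ)..1, e (deriv γ t)‖ := by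
        rw [intervalIntegral.integral_eq_sub_of_hasDerivAt (fun t _ => hderiv t) hint,
          ← map_sub, euclNorm_eq_norm_toLp]
        rfl
    _ ≤ ∫ t in (0 : ℝ)..1, ‖e (deriv γ t)‖ :=
        intervalIntegral.norm_integral_le_integral_norm zero_le_one
    _ = ∫ t in (0 : ℝ)..1, euclNorm (deriv γ t) := by
        simp_rw [euclNorm_eq_norm_toLp]
        rfl

lemma dotProduct_conj_mulVec (J A : Matrix (Fin n) (Fin n) ℝ) (v : Fin n → ℝ) :
    v ⬝ᵥ (Jᵀ * A * J) *ᵥ v = (J *ᵥ v) ⬝ᵥ A *ᵥ (J *ᵥ v) := by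
  rw [← mulVec_mulVec, ← mulVec_mulVec, dotProduct_mulVec, vecMul_transpose]

lemma sqrt_dotProduct_conj_le {A B J : Matrix (Fin n) (Fin n) ℝ} {ρ : ℝ} (hρ : 0 ≤ ρ)
    (h : (ρ ^ 2 • A - Jᵀ * B * J).PosSemidef) (v : Fin n → ℝ) :
    √((J *ᵥ v) ⬝ᵥ B *ᵥ (J *ᵥ v)) ≤ ρ * √(v ⬝ᵥ A *ᵥ v) := by
  have hform : (J *ᵥ v) ⬝ᵥ B *ᵥ (J *ᵥ v) ≤ ρ ^ 2 * (v ⬝ᵥ A *ᵥ v) := by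
    have := h.dotProduct_mulVec_nonneg v
    rw [star_trivial, sub_mulVec, smul_mulVec, dotProduct_sub, dotProduct_smul,
      dotProduct_conj_mulVec, smul_eq_mul] at this
    linarith
  calc √((J *ᵥ v) ⬝ᵥ B *ᵥ (J *ᵥ v)) ≤ √(ρ ^ 2 * (v ⬝ᵥ A *ᵥ v)) := Real.sqrt_le_sqrt hform
    _ = ρ * √(v ⬝ᵥ A *ᵥ v) := by rw [Real.sqrt_mul (sq_nonneg ρ), Real.sqrt_sq hρ]

section MetricLength

variable (M : (Fin n → ℝ) → Matrix (Fin n) (Fin n) ℝ)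

noncomputable def metricSpeed (x v : Fin n → ℝ) : ℝ :=
  √(v ⬝ᵥ M x *ᵥ v)

noncomputable def metricLength (γ : ℝ → Fin n → ℝ) : ℝ :=
  ∫ t in (0 : ℝ)..1, metricSpeed M (γ t) (deriv γ t)

/-- Chains of `C¹` paths stand in for piecewise `C¹` curves, so that the Riemannian distance of
`M` never has to be formed as an infimum. -/
inductive ChainJoined : (Fin n → ℝ) → (Fin n → ℝ) → ℝ → Prop
  | path {γ : ℝ → Fin n → ℝ} : ContDiff ℝ 1 γ → ChainJoined (γ 0) (γ 1) (metricLength M γ)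
  | trans {a b c : Fin n → ℝ} {ℓ ℓ' : ℝ} :
      ChainJoined a b ℓ → ChainJoined b c ℓ' → ChainJoined a c (ℓ + ℓ')
  | mono {a b : Fin n → ℝ} {ℓ ℓ' : ℝ} : ChainJoined a b ℓ → ℓ ≤ ℓ' → ChainJoined a b ℓ'

variable {M}

lemma sqrt_mul_euclNorm_le_metricSpeed {α : ℝ}
    (hlb : ∀ x v, α * euclNorm v ^ 2 ≤ v ⬝ᵥ M x *ᵥ v) (x v : Fin n → ℝ) :
    √α * euclNorm v ≤ metricSpeed M x v := by
  rw [metricSpeed, ← Real.sqrt_sq (show 0 ≤ euclNorm v from Real.sqrt_nonneg _),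
    ← Real.sqrt_mul' _ (sq_nonneg _)]
  exact Real.sqrt_le_sqrt (hlb x v)

lemma metricSpeed_le_sqrt_mul_euclNorm {α : ℝ}
    (hub : ∀ x v, v ⬝ᵥ M x *ᵥ v ≤ α * euclNorm v ^ 2) (x v : Fin n → ℝ) :
    metricSpeed M x v ≤ √α * euclNorm v := by
  rw [metricSpeed, ← Real.sqrt_sq (show 0 ≤ euclNorm v from Real.sqrt_nonneg _),
    ← Real.sqrt_mul' _ (sq_nonneg _)]
  exact Real.sqrt_le_sqrt (hub x v)

variable (hM : Continuous M)
include hM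

lemma intervalIntegrable_metricSpeed {γ : ℝ → Fin n → ℝ} (hγ : ContDiff ℝ 1 γ) :
    IntervalIntegrable (fun t => metricSpeed M (γ t) (deriv γ t)) MeasureTheory.volume 0 1 := by
  have hγ' := hγ.continuous_deriv le_rfl
  exact (Real.continuous_sqrt.comp (hγ'.dotProduct
    ((hM.comp hγ.continuous).matrix_mulVec hγ'))).intervalIntegrable _ _

lemma sqrt_mul_euclNorm_sub_le_metricLength {α : ℝ}
    (hlb : ∀ x v, α * euclNorm v ^ 2 ≤ v ⬝ᵥ M x *ᵥ v) {γ : ℝ → Fin n → ℝ}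
    (hγ : ContDiff ℝ 1 γ) : √α * euclNorm (γ 1 - γ 0) ≤ metricLength M γ := by
  have hnorm : Continuous fun t => euclNorm (deriv γ t) := by
    have hγ' := hγ.continuous_deriv le_rfl
    exact Real.continuous_sqrt.comp (hγ'.dotProduct hγ')
  calc √α * euclNorm (γ 1 - γ 0) ≤ √α * ∫ t in (0 : ℝ)..1, euclNorm (deriv γ t) :=
        mul_le_mul_of_nonneg_left (euclNorm_sub_le_integral hγ) (Real.sqrt_nonneg α)
    _ = ∫ t in (0 : ℝ)..1, √α * euclNorm (deriv γ t) :=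
        (intervalIntegral.integral_const_mul _ _).symm
    _ ≤ metricLength M γ :=
        intervalIntegral.integral_mono zero_le_one
          ((continuous_const.mul hnorm).intervalIntegrable _ _)
          (intervalIntegrable_metricSpeed hM hγ)
          fun t => sqrt_mul_euclNorm_le_metricSpeed hlb _ _

lemma ChainJoined.sqrt_mul_euclNorm_sub_le {α : ℝ}
    (hlb : ∀ x v, α * euclNorm v ^ 2 ≤ v ⬝ᵥ M x *ᵥ v) {a b : Fin n → ℝ} {ℓ : ℝ}
    (h : ChainJoined M a b ℓ) : √α * euclNorm (b - a) ≤ ℓ := by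
  induction h with
  | path hγ => exact sqrt_mul_euclNorm_sub_le_metricLength hM hlb hγ
  | @trans a b c ℓ ℓ' _ _ ih ih' =>
    calc √α * euclNorm (c - a) ≤ √α * (euclNorm (c - b) + euclNorm (b - a)) := by
          gcongr
          simpa using euclNorm_add_le (c - b) (b - a)
      _ ≤ ℓ + ℓ' := by linarith
  | mono _ hle ih => exact ih.trans hle

lemma chainJoined_add {α : ℝ} (hub : ∀ x v, v ⬝ᵥ M x *ᵥ v ≤ α * euclNorm v ^ 2)
    (a v : Fin n → ℝ) : ChainJoined M a (a + v) (√α * euclNorm v) := by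
  have hγ : ContDiff ℝ 1 fun t : ℝ => a + t • v :=
    contDiff_const.add (contDiff_id.smul contDiff_const)
  have hderiv : ∀ t, deriv (fun t : ℝ => a + t • v) t = v := fun t => by
    simpa using (((hasDerivAt_id t).smul_const v).const_add a).deriv
  have hlen : metricLength M (fun t : ℝ => a + t • v) ≤ √α * euclNorm v := by
    calc metricLength M (fun t : ℝ => a + t • v)
        ≤ ∫ _ in (0 : ℝ)..1, √α * euclNorm v :=
          intervalIntegral.integral_mono zero_le_one (intervalIntegrable_metricSpeed hM hγ)
            intervalIntegrable_const fun t => by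
              simpa only [hderiv] using metricSpeed_le_sqrt_mul_euclNorm hub _ _
      _ = √α * euclNorm v := by simp
  simpa using (ChainJoined.path hγ).mono hlen

section Contraction

variable {Φ : (Fin n → ℝ) → Fin n → ℝ} {J : (Fin n → ℝ) → Matrix (Fin n) (Fin n) ℝ}
  (hΦ : ContDiff ℝ 1 Φ) (hJ : ∀ x, HasFDerivAt Φ (J x).mulVecLin.toContinuousLinearMap x)
  {ρ : ℝ} (hρ : 0 ≤ ρ) (hcontr : ∀ x, (ρ ^ 2 • M x - (J x)ᵀ * M (Φ x) * J x).PosSemidef)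
include hΦ hJ hρ hcontr

lemma metricLength_comp_le {γ : ℝ → Fin n → ℝ} (hγ : ContDiff ℝ 1 γ) :
    metricLength M (Φ ∘ γ) ≤ ρ * metricLength M γ := by
  have hderiv : ∀ t, deriv (Φ ∘ γ) t = J (γ t) *ᵥ deriv γ t := fun t =>
    ((hJ (γ t)).comp_hasDerivAt t (hγ.differentiable one_ne_zero t).hasDerivAt).deriv
  rw [metricLength, metricLength, ← intervalIntegral.integral_const_mul]
  refine intervalIntegral.integral_mono zero_le_one
    (intervalIntegrable_metricSpeed hM (hΦ.comp hγ))
    ((intervalIntegrable_metricSpeed hM hγ).const_mul ρ) fun t => ?_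
  simp only [metricSpeed, hderiv, Function.comp_apply]
  exact sqrt_dotProduct_conj_le hρ (hcontr (γ t)) _

lemma ChainJoined.map {a b : Fin n → ℝ} {ℓ : ℝ} (h : ChainJoined M a b ℓ) :
    ChainJoined M (Φ a) (Φ b) (ρ * ℓ) := by
  induction h with
  | path hγ =>
    exact (ChainJoined.path (hΦ.comp hγ)).mono (metricLength_comp_le hM hΦ hJ hρ hcontr hγ)
  | trans _ _ ih ih' => exact mul_add ρ _ _ ▸ ih.trans ih'
  | mono _ hle ih => exact ih.mono (mul_le_mul_of_nonneg_left hle hρ)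

end Contraction

end MetricLength

end

lemma limsup_le_of_le_of_tendsto {u v : ℕ → ℝ} {l : ℝ} (hu : ∀ k, 0 ≤ u k)
    (huv : ∀ k, u k ≤ v k) (hv : Tendsto v atTop (𝓝 l)) : limsup u atTop ≤ l :=
  hv.limsup_eq ▸ limsup_le_limsup (Eventually.of_forall huv)
    (isBoundedUnder_of ⟨0, hu⟩).isCoboundedUnder_le hv.isBoundedUnder_le

theorem bounded_perturbation_tracking_limsup_bound_general
    (n : ℕ) (β α₁ α₂ ε : ℝ)
    (hβ0 : 0 < β) (hβ1 : β < 1) (hα₁ : 0 < α₁)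
    (Φ : (Fin n → ℝ) → Fin n → ℝ) (hΦ : ContDiff ℝ 1 Φ)
    (J : (Fin n → ℝ) → Matrix (Fin n) (Fin n) ℝ)
    (hJ : ∀ x, HasFDerivAt Φ (J x).mulVecLin.toContinuousLinearMap x)
    (M : (Fin n → ℝ) → Matrix (Fin n) (Fin n) ℝ)
    (hMcont : Continuous M)
    (hMlb : ∀ x (v : Fin n → ℝ), α₁ * (euclNorm v) ^ 2 ≤ v ⬝ᵥ (M x).mulVec v)
    (hMub : ∀ x (v : Fin n → ℝ), v ⬝ᵥ (M x).mulVec v ≤ α₂ * (euclNorm v) ^ 2)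
    (hcontr : ∀ x, ((1 - β) • M x - (J x)ᵀ * M (Φ x) * J x).PosSemidef)
    (x y : ℕ → Fin n → ℝ) (w : ℕ → Fin n → ℝ)
    (hx : ∀ k, x (k + 1) = Φ (x k) + w k)
    (hw : ∀ k, euclNorm (w k) ≤ ε)
    (hy : ∀ k, y (k + 1) = Φ (y k)) :
    Filter.limsup (fun k => euclNorm (x k - y k)) Filter.atTop ≤
      Real.sqrt α₂ / Real.sqrt α₁ * ε / (1 - Real.sqrt (1 - β)) := by
  set ρ := √(1 - β)
  have hρ0 : 0 ≤ ρ := Real.sqrt_nonneg _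
  have hρ1 : ρ < 1 := (Real.sqrt_lt' one_pos).mpr (by linarith)
  have hcontr' : ∀ x, (ρ ^ 2 • M x - (J x)ᵀ * M (Φ x) * J x).PosSemidef := by
    rwa [Real.sq_sqrt (by linarith)]
  -- `L k` solves `L (k + 1) = ρ * L k + √α₂ * ε` with `L 0 = √α₂ * ‖x 0 - y 0‖`.
  set ℓ := √α₂ * ε / (1 - ρ)
  have hℓ : ρ * ℓ + √α₂ * ε = ℓ := by
    simp only [ℓ]
    field_simp [show (1 : ℝ) - ρ ≠ 0 by linarith]
    ring
  set L : ℕ → ℝ := fun k => ℓ + ρ ^ k * (√α₂ * euclNorm (x 0 - y 0) - ℓ)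
  have hjoin : ∀ k, ChainJoined M (y k) (x k) (L k) := by
    intro k
    induction k with
    | zero => simpa [L] using chainJoined_add hMcont hMub (y 0) (x 0 - y 0)
    | succ k ih =>
      rw [hx, hy]
      refine ((ih.map hMcont hΦ hJ hρ0 hcontr').trans
        (chainJoined_add hMcont hMub _ _)).mono ?_
      have hstep : ρ * L k + √α₂ * ε = L (k + 1) := by
        simp only [L]
        linear_combination hℓ
      rw [← hstep]
      gcongr
      exact hw k
  have hdist : ∀ k, euclNorm (x k - y k) ≤ L k / √α₁ := fun k => by
    rw [le_div_iff₀' (Real.sqrt_pos.mpr hα₁)]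
    exact (hjoin k).sqrt_mul_euclNorm_sub_le hMcont hMlb
  have hL : Tendsto (fun k => L k / √α₁) atTop (𝓝 (ℓ / √α₁)) := by
    have := (((tendsto_pow_atTop_nhds_zero_of_lt_one hρ0 hρ1).mul_const
      (√α₂ * euclNorm (x 0 - y 0) - ℓ)).const_add ℓ).div_const √α₁
    rwa [zero_mul, add_zero] at this
  calc limsup (fun k => euclNorm (x k - y k)) atTop ≤ ℓ / √α₁ :=
        limsup_le_of_le_of_tendsto (fun k => Real.sqrt_nonneg _) hdist hL
    _ = √α₂ / √α₁ * ε / (1 - ρ) := by ring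

/-- bounded tracking, Proposition 3(i) + Lemma 2: for a contracting C¹
map `Φ` (Jacobian `J(x) = DΦ(x)`, continuous uniformly bounded symmetric metric `M`,
contraction condition `DΦ(x)ᵀ M(Φ(x)) DΦ(x) ⪯ (1-β) M(x)` with `0 < β < 1`), a
trajectory `x_{k+1} = Φ(x_k) + w_k` with `‖w_k‖ ≤ ε` tracks the unperturbed trajectory
`y_{k+1} = Φ(y_k)` with `limsup_k ‖x_k - y_k‖ ≤ (√α₂/√α₁) ε / (1 - √(1-β))`. -/
theorem bounded_perturbation_tracking_limsup_bound
    (n : ℕ) (hn : 1 ≤ n) (β α₁ α₂ ε : ℝ)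
    (hβ0 : 0 < β) (hβ1 : β < 1) (hα₁ : 0 < α₁) (hα₁₂ : α₁ ≤ α₂) (hε : 0 ≤ ε)
    (Φ : (Fin n → ℝ) → Fin n → ℝ) (hΦ : ContDiff ℝ 1 Φ)
    (J : (Fin n → ℝ) → Matrix (Fin n) (Fin n) ℝ)
    (hJ : ∀ x, HasFDerivAt Φ (J x).mulVecLin.toContinuousLinearMap x)
    (M : (Fin n → ℝ) → Matrix (Fin n) (Fin n) ℝ)
    (hMcont : Continuous M) (hMsym : ∀ x, (M x).IsHermitian)
    (hMlb : ∀ x (v : Fin n → ℝ), α₁ * (euclNorm v) ^ 2 ≤ v ⬝ᵥ (M x).mulVec v)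
    (hMub : ∀ x (v : Fin n → ℝ), v ⬝ᵥ (M x).mulVec v ≤ α₂ * (euclNorm v) ^ 2)
    (hcontr : ∀ x, ((1 - β) • M x - (J x)ᵀ * M (Φ x) * J x).PosSemidef)
    (x y : ℕ → Fin n → ℝ) (w : ℕ → Fin n → ℝ)
    (hx : ∀ k, x (k + 1) = Φ (x k) + w k)
    (hw : ∀ k, euclNorm (w k) ≤ ε)
    (hy : ∀ k, y (k + 1) = Φ (y k)) :
    Filter.limsup (fun k => euclNorm (x k - y k)) Filter.atTop ≤
      Real.sqrt α₂ / Real.sqrt α₁ * ε / (1 - Real.sqrt (1 - β)) :=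
  bounded_perturbation_tracking_limsup_bound_general n β α₁ α₂ ε hβ0 hβ1 hα₁ Φ hΦ J hJ M hMcont hMlb
    hMub hcontr x y w hx hw hy
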